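/- arXiv:2501.10743 — 2 statements merged into one kernel-verified Lean document; each statement's English description precedes it below -/
import Mathlib

section
/- (Theorem 1, conditional form.) Let g and Z be independent random variables on a probability space, where g is exponentially distributed with rate 1 and Z has the Erlang (Gamma) distribution with integer shape k ≥ 1 and rate 1. Let η, ξ, τ, P_t, E_th, β, α be positive reals and let 0 < d₁ ≤ d_K. Set T = E_th/(η ξ τ P_t) and c = T/(β d₁^{−α} + d_K^{−α}). Then ℙ( g > d₁^{α}(T − d_K^{−α} Z) and g > β Z ) = ∫₀^c (z^{k−1}/(k−1)!) · exp(−T d₁^{α} + d₁^{α} d_K^{−α} z − z) dz + ∫_c^∞ (z^{k−1}/(k−1)!) · exp(−(β + 1) z) dz. -/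
open scoped ENNReal
open MeasureTheory ProbabilityTheory Real Set

lemma expMeasure_Ioi_eq (t : ℝ) :
    expMeasure 1 (Set.Ioi t) = ENNReal.ofReal (Real.exp (-(max t 0))) := by
  haveI := isProbabilityMeasure_expMeasure (one_pos : (0:ℝ) < 1)
  rcases le_or_gt 0 t with ht | ht
  · have hcongr : ∫⁻ x in Set.Ioi t, gammaPDF 1 1 x
        = ∫⁻ x in Set.Ioi t, ENNReal.ofReal (Real.exp (-x)) :=
      setLIntegral_congr_fun measurableSet_Ioi (fun x (hx : t < x) => by
        rw [gammaPDF_of_nonneg (le_trans ht hx.le)]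
        norm_num [Real.Gamma_one, Real.rpow_zero, Real.one_rpow])
    rw [max_eq_left ht,
      show expMeasure 1 = volume.withDensity (gammaPDF 1 1) from rfl,
      withDensity_apply _ measurableSet_Ioi, hcongr,
      ← ofReal_integral_eq_lintegral_ofReal]
    · rw [integral_exp_neg_Ioi]
    · have h := exp_neg_integrableOn_Ioi t (one_pos : (0:ℝ) < 1); simp only [neg_one_mul] at h; exact h
    · exact ae_of_all _ fun x => (Real.exp_pos _).le
  · rw [max_eq_right ht.le]
    have h0 : expMeasure 1 (Set.Iic t) = 0 := by
      have h1 : expMeasure 1 (Set.Iio 0) = 0 := by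
        rw [show expMeasure 1 = volume.withDensity (exponentialPDF 1) from rfl,
          withDensity_apply _ measurableSet_Iio]
        exact lintegral_exponentialPDF_of_nonpos le_rfl
      exact measure_mono_null (fun x hx => lt_of_le_of_lt hx ht) h1
    have h2 := measure_compl (μ := expMeasure 1) (measurableSet_Iic (a := t)) (measure_ne_top _ _)
    rw [compl_Iic] at h2
    rw [h2, h0, measure_univ]
    simp

/-- Theorem 1 of the paper, conditional form: lower bound of the joint success
probability conditional on `k` interferers, with `g ~ Exp(1)` and `Z ~ Erlang(k, 1)`
independent. -/
theorem jsp_lower_bound_conditional {Ω : Type*} [MeasurableSpace Ω] (P : Measure Ω)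
    [IsProbabilityMeasure P] (g Z : Ω → ℝ) (hg : Measurable g) (hZ : Measurable Z)
    (hInd : IndepFun g Z P)
    (hgLaw : P.map g = expMeasure 1)
    (k : ℕ) (hk : 1 ≤ k)
    (hZLaw : P.map Z = gammaMeasure k 1)
    (η ξ τ Pt Eth β α d₁ dK : ℝ)
    (hη : 0 < η) (hξ : 0 < ξ) (hτ : 0 < τ) (hPt : 0 < Pt) (hEth : 0 < Eth)
    (hβ : 0 < β) (hα : 0 < α) (hd₁ : 0 < d₁) (hd : d₁ ≤ dK)
    (T c : ℝ) (hT : T = Eth / (η * ξ * τ * Pt))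
    (hc : c = T / (β * d₁ ^ (-α) + dK ^ (-α))) :
    (P {ω | g ω > d₁ ^ α * (T - dK ^ (-α) * Z ω) ∧ g ω > β * Z ω}).toReal =
      (∫ z in (0:ℝ)..c, (z ^ (k - 1) / (Nat.factorial (k - 1))) *
          Real.exp (-(T * d₁ ^ α) + d₁ ^ α * dK ^ (-α) * z - z)) +
      ∫ z in Set.Ioi c, (z ^ (k - 1) / (Nat.factorial (k - 1))) *
          Real.exp (-(β + 1) * z) := by
  have hk' : (0:ℝ) < (k:ℝ) := by exact_mod_cast hk
  haveI hγP : IsProbabilityMeasure (gammaMeasure (k:ℝ) 1) := isProbabilityMeasure_gammaMeasure hk' one_pos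
  haveI hεP : IsProbabilityMeasure (expMeasure 1) :=
    isProbabilityMeasure_expMeasure (one_pos : (0:ℝ) < 1)
  set a := d₁ ^ α with ha_def
  set b := dK ^ (-α) with hb_def
  have ha : 0 < a := Real.rpow_pos_of_pos hd₁ α
  have hdK : 0 < dK := lt_of_lt_of_le hd₁ hd
  have hb : 0 < b := Real.rpow_pos_of_pos hdK _
  have hTpos : 0 < T := by rw [hT]; positivity
  have hd₁' : 0 < d₁ ^ (-α) := Real.rpow_pos_of_pos hd₁ _
  have hcpos : 0 < c := by rw [hc]; positivity
  have hinv : d₁ ^ (-α) * a = 1 := by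
    rw [ha_def, ← Real.rpow_add hd₁]; simp
  have hEq : c * (β + a * b) = T * a := by
    have h2 : c * (β * d₁ ^ (-α) + b) = T := by
      rw [hc]; field_simp
    linear_combination a * h2 - c * β * hinv
  -- cast and Gamma facts
  have hΓ : Real.Gamma (k:ℝ) = (Nat.factorial (k-1) : ℝ) := by
    rw [show (k:ℝ) = ((k-1 : ℕ) : ℝ) + 1 by push_cast [Nat.cast_sub hk]; ring,
      Real.Gamma_nat_eq_factorial]
  have hcast : ∀ x : ℝ, x ^ ((k:ℝ)-1) = x ^ (k-1) := fun x => by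
    rw [show ((k:ℝ)-1) = ((k-1 : ℕ) : ℝ) by push_cast [Nat.cast_sub hk]; ring,
      Real.rpow_natCast]
  -- the set in the product space
  set S : Set (ℝ × ℝ) := {p | a * (T - b * p.1) < p.2 ∧ β * p.1 < p.2} with hS_def
  have hS : MeasurableSet S := by
    have : S = {p : ℝ × ℝ | a * (T - b * p.1) < p.2} ∩ {p : ℝ × ℝ | β * p.1 < p.2} := rfl
    rw [this]
    exact (measurableSet_lt (by fun_prop) measurable_snd).inter
      (measurableSet_lt (by fun_prop) measurable_snd)
  have hmap : P.map (fun ω => (Z ω, g ω)) = (gammaMeasure (k:ℝ) 1).prod (expMeasure 1) := by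
    rw [← hZLaw, ← hgLaw]
    exact (indepFun_iff_map_prod_eq_prod_map_map hZ.aemeasurable hg.aemeasurable).mp hInd.symm
  have hset : {ω | g ω > a * (T - b * Z ω) ∧ g ω > β * Z ω}
      = (fun ω => (Z ω, g ω)) ⁻¹' S := rfl
  have hkey : P {ω | g ω > a * (T - b * Z ω) ∧ g ω > β * Z ω}
      = ((gammaMeasure (k:ℝ) 1).prod (expMeasure 1)) S := by
    rw [hset, ← Measure.map_apply (hZ.prodMk hg) hS, hmap]
  -- slice
  have hslice : ∀ z : ℝ, (Prod.mk z ⁻¹' S) = Set.Ioi (max (a * (T - b * z)) (β * z)) := by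
    intro z; ext x; simp [hS_def, max_lt_iff, Set.mem_Ioi]
  have h1 : ((gammaMeasure (k:ℝ) 1).prod (expMeasure 1)) S
      = ∫⁻ z, ENNReal.ofReal (Real.exp (-(max (max (a * (T - b * z)) (β * z)) 0)))
          ∂(gammaMeasure (k:ℝ) 1) := by
    rw [Measure.prod_apply hS]
    exact lintegral_congr fun z => by rw [hslice z, expMeasure_Ioi_eq]
  have hFmeas : Measurable fun z : ℝ =>
      ENNReal.ofReal (Real.exp (-(max (max (a * (T - b * z)) (β * z)) 0))) := by
    apply Measurable.ennreal_ofReal; fun_prop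
  have h2 : ∫⁻ z, ENNReal.ofReal (Real.exp (-(max (max (a * (T - b * z)) (β * z)) 0)))
        ∂(gammaMeasure (k:ℝ) 1)
      = ∫⁻ z, gammaPDF (k:ℝ) 1 z *
          ENNReal.ofReal (Real.exp (-(max (max (a * (T - b * z)) (β * z)) 0))) := by
    have hpdfmeas : Measurable (gammaPDF (k:ℝ) 1) :=
      (measurable_gammaPDFReal _ _).ennreal_ofReal
    rw [gammaMeasure, lintegral_withDensity_eq_lintegral_mul _ hpdfmeas hFmeas]
    rfl
  -- split the integral
  have hdisj : Disjoint (Set.Icc (0:ℝ) c) (Set.Ioi c) := by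
    rw [Set.disjoint_left]
    rintro z ⟨_, h1z⟩ h2z
    exact absurd h2z (not_lt.2 h1z)
  have hsplit : ∫⁻ z, gammaPDF (k:ℝ) 1 z *
        ENNReal.ofReal (Real.exp (-(max (max (a * (T - b * z)) (β * z)) 0)))
      = (∫⁻ z in Set.Icc (0:ℝ) c, gammaPDF (k:ℝ) 1 z *
          ENNReal.ofReal (Real.exp (-(max (max (a * (T - b * z)) (β * z)) 0))))
        + ∫⁻ z in Set.Ioi c, gammaPDF (k:ℝ) 1 z *
          ENNReal.ofReal (Real.exp (-(max (max (a * (T - b * z)) (β * z)) 0))) := by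
    rw [← lintegral_add_compl (fun z => gammaPDF (k:ℝ) 1 z *
      ENNReal.ofReal (Real.exp (-(max (max (a * (T - b * z)) (β * z)) 0))))
      (measurableSet_Ici (a := (0:ℝ)))]
    have hzero : ∫⁻ z in (Set.Ici (0:ℝ))ᶜ, gammaPDF (k:ℝ) 1 z *
        ENNReal.ofReal (Real.exp (-(max (max (a * (T - b * z)) (β * z)) 0))) = 0 := by
      rw [compl_Ici]
      have : ∫⁻ z in Set.Iio (0:ℝ), gammaPDF (k:ℝ) 1 z *
          ENNReal.ofReal (Real.exp (-(max (max (a * (T - b * z)) (β * z)) 0)))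
          = ∫⁻ _ in Set.Iio (0:ℝ), (0:ℝ≥0∞) :=
        setLIntegral_congr_fun measurableSet_Iio (fun z (hz : z < 0) => by
          rw [gammaPDF_of_neg hz, zero_mul])
      rw [this, lintegral_const, zero_mul]
    rw [hzero, add_zero, ← Icc_union_Ioi_eq_Ici hcpos.le,
      lintegral_union measurableSet_Ioi hdisj]
  -- piece on Icc 0 c
  have hmax1 : ∀ z ∈ Set.Icc (0:ℝ) c, max (max (a * (T - b * z)) (β * z)) 0
      = a * (T - b * z) := by
    rintro z ⟨hz0, hzc⟩
    have hBA : β * z ≤ a * (T - b * z) := by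
      nlinarith [hEq, mul_le_mul_of_nonneg_left hzc (show (0:ℝ) ≤ β + a * b by positivity)]
    have hB0 : (0:ℝ) ≤ β * z := by positivity
    rw [max_eq_left hBA, max_eq_left (le_trans hB0 hBA)]
  have hIcc : ∫⁻ z in Set.Icc (0:ℝ) c, gammaPDF (k:ℝ) 1 z *
        ENNReal.ofReal (Real.exp (-(max (max (a * (T - b * z)) (β * z)) 0)))
      = ENNReal.ofReal (∫ z in Set.Icc (0:ℝ) c,
          z ^ (k - 1) / (Nat.factorial (k - 1)) * Real.exp (-(T * a) + a * b * z - z)) := by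
    have hcongr : ∫⁻ z in Set.Icc (0:ℝ) c, gammaPDF (k:ℝ) 1 z *
          ENNReal.ofReal (Real.exp (-(max (max (a * (T - b * z)) (β * z)) 0)))
        = ∫⁻ z in Set.Icc (0:ℝ) c, ENNReal.ofReal
            (z ^ (k - 1) / (Nat.factorial (k - 1)) * Real.exp (-(T * a) + a * b * z - z)) := by
      refine setLIntegral_congr_fun measurableSet_Icc (fun z hz => ?_)
      have hzr := Real.rpow_nonneg hz.1 ((k:ℝ) - 1)
      have hnn : (0:ℝ) ≤ (1:ℝ) ^ (k:ℝ) / Real.Gamma k * z ^ ((k:ℝ)-1) * Real.exp (-(1*z)) := by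
        have hG := Real.Gamma_pos_of_pos hk'
        positivity
      rw [hmax1 z hz, gammaPDF_of_nonneg hz.1, ← ENNReal.ofReal_mul hnn]
      congr 1
      rw [hΓ, hcast, Real.one_rpow, mul_assoc, ← Real.exp_add,
        show -(1*z) + -(a * (T - b * z)) = -(T * a) + a * b * z - z by ring]
      ring
    rw [hcongr, ← ofReal_integral_eq_lintegral_ofReal]
    · exact Continuous.integrableOn_Icc (by fun_prop)
    · filter_upwards [ae_restrict_mem measurableSet_Icc] with z hz
      have := pow_nonneg hz.1 (k-1)
      positivity
  -- piece on Ioi c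
  have hmax2 : ∀ z ∈ Set.Ioi c, max (max (a * (T - b * z)) (β * z)) 0 = β * z := by
    intro z hz
    have hcz : c < z := hz
    have hz0 : (0:ℝ) < z := lt_trans hcpos hcz
    have hAB : a * (T - b * z) ≤ β * z := by
      nlinarith [hEq, mul_le_mul_of_nonneg_left hcz.le (show (0:ℝ) ≤ β + a * b by positivity)]
    have hB0 : (0:ℝ) ≤ β * z := by positivity
    rw [max_eq_right hAB, max_eq_left hB0]
  have hIoi : ∫⁻ z in Set.Ioi c, gammaPDF (k:ℝ) 1 z *
        ENNReal.ofReal (Real.exp (-(max (max (a * (T - b * z)) (β * z)) 0)))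
      = ENNReal.ofReal (∫ z in Set.Ioi c,
          z ^ (k - 1) / (Nat.factorial (k - 1)) * Real.exp (-(β + 1) * z)) := by
    have hcongr : ∫⁻ z in Set.Ioi c, gammaPDF (k:ℝ) 1 z *
          ENNReal.ofReal (Real.exp (-(max (max (a * (T - b * z)) (β * z)) 0)))
        = ∫⁻ z in Set.Ioi c, ENNReal.ofReal
            (z ^ (k - 1) / (Nat.factorial (k - 1)) * Real.exp (-(β + 1) * z)) := by
      refine setLIntegral_congr_fun measurableSet_Ioi (fun z hz => ?_)
      have hz0 : (0:ℝ) ≤ z := (lt_trans hcpos hz).le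
      have hzr := Real.rpow_nonneg hz0 ((k:ℝ) - 1)
      have hnn : (0:ℝ) ≤ (1:ℝ) ^ (k:ℝ) / Real.Gamma k * z ^ ((k:ℝ)-1) * Real.exp (-(1*z)) := by
        have hG := Real.Gamma_pos_of_pos hk'
        positivity
      rw [hmax2 z hz, gammaPDF_of_nonneg hz0, ← ENNReal.ofReal_mul hnn]
      congr 1
      rw [hΓ, hcast, Real.one_rpow, mul_assoc, ← Real.exp_add,
        show -(1*z) + -(β * z) = -(β + 1) * z by ring]
      ring
    have hint2 : IntegrableOn (fun z : ℝ =>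
        z ^ (k - 1) / (Nat.factorial (k - 1)) * Real.exp (-(β + 1) * z)) (Set.Ioi c) := by
      have base : IntegrableOn (fun x : ℝ => x ^ ((k:ℝ)-1) * Real.exp (-(β+1) * x))
          (Set.Ioi 0) := by
        have h := integrableOn_rpow_mul_exp_neg_mul_rpow (p := 1) (s := (k:ℝ)-1) (b := β+1)
          (by linarith) one_pos (by positivity)
        simpa [Real.rpow_one] using h
      have h1 := (base.mono_set (Ioi_subset_Ioi hcpos.le)).const_mul
        ((Nat.factorial (k-1) : ℝ)⁻¹)
      have hfe : (fun x : ℝ => ((Nat.factorial (k-1) : ℝ))⁻¹ *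
            (x ^ ((k:ℝ)-1) * Real.exp (-(β+1) * x)))
          = fun z : ℝ => z ^ (k - 1) / (Nat.factorial (k - 1)) * Real.exp (-(β + 1) * z) :=
        funext fun x => by rw [hcast]; ring
      rwa [hfe] at h1
    rw [hcongr, ← ofReal_integral_eq_lintegral_ofReal hint2]
    filter_upwards [ae_restrict_mem measurableSet_Ioi] with z hz
    have := pow_nonneg (lt_trans hcpos hz).le (k-1)
    positivity
  -- assemble
  have hI1nn : (0:ℝ) ≤ ∫ z in Set.Icc (0:ℝ) c,
      z ^ (k - 1) / (Nat.factorial (k - 1)) * Real.exp (-(T * a) + a * b * z - z) := by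
    refine setIntegral_nonneg measurableSet_Icc (fun z hz => ?_)
    have := pow_nonneg hz.1 (k-1)
    positivity
  have hI2nn : (0:ℝ) ≤ ∫ z in Set.Ioi c,
      z ^ (k - 1) / (Nat.factorial (k - 1)) * Real.exp (-(β + 1) * z) := by
    refine setIntegral_nonneg measurableSet_Ioi (fun z hz => ?_)
    have := pow_nonneg (lt_trans hcpos hz).le (k-1)
    positivity
  rw [hkey, h1, h2, hsplit, hIcc, hIoi, ← ENNReal.ofReal_add hI1nn hI2nn,
    ENNReal.toReal_ofReal (add_nonneg hI1nn hI2nn),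
    intervalIntegral.integral_of_le hcpos.le, integral_Icc_eq_integral_Ioc]
end

section
/- (Theorem 2, conditional form.) Let g and Z be independent random variables on a probability space, where g is exponentially distributed with rate 1 and Z has the Erlang (Gamma) distribution with integer shape k ≥ 1 and rate 1. Let η, ξ, τ, P_t, E_th, β, α be positive reals and let 0 < d₁ ≤ d_K. Set T = E_th/(η ξ τ P_t) and c = T/(β d_K^{−α} + d₁^{−α}). Then ℙ( g > d₁^{α}(T − d₁^{−α} Z) and g > β d₁^{α} d_K^{−α} Z ) = ∫₀^c (z^{k−1}/(k−1)!) · exp(−T d₁^{α}) dz + ∫_c^∞ (z^{k−1}/(k−1)!) · exp(−(β d₁^{α} d_K^{−α} + 1) z) dz. -/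
open MeasureTheory ProbabilityTheory

lemma expMeasure_one_Ioi {t : ℝ} (ht : 0 ≤ t) :
    expMeasure 1 (Set.Ioi t) = ENNReal.ofReal (Real.exp (-t)) := by
  rw [expMeasure, gammaMeasure, withDensity_apply _ measurableSet_Ioi]
  have h1 : ∀ x ∈ Set.Ioi t, gammaPDF 1 1 x = ENNReal.ofReal (Real.exp (-x)) := by
    intro x hx
    rw [gammaPDF_of_nonneg (ht.trans (le_of_lt hx))]
    norm_num [Real.Gamma_one]
  rw [setLIntegral_congr_fun_ae measurableSet_Ioi (MeasureTheory.ae_of_all _ h1),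
    ← ofReal_integral_eq_lintegral_ofReal, integral_exp_neg_Ioi]
  · exact (by simpa [neg_one_mul] using exp_neg_integrableOn_Ioi t (zero_lt_one) :
      IntegrableOn (fun x => Real.exp (-x)) (Set.Ioi t))
  · exact MeasureTheory.ae_of_all _ fun x => (Real.exp_pos _).le

set_option maxHeartbeats 1600000 in
/-- Theorem 2 of the paper, conditional form: upper bound of the joint success
probability conditional on `k` interferers, with `g ~ Exp(1)` and `Z ~ Erlang(k, 1)`
independent. -/
theorem jsp_upper_bound_conditional {Ω : Type*} [MeasurableSpace Ω] (P : Measure Ω)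
    [IsProbabilityMeasure P] (g Z : Ω → ℝ) (hg : Measurable g) (hZ : Measurable Z)
    (hInd : IndepFun g Z P)
    (hgLaw : P.map g = expMeasure 1)
    (k : ℕ) (hk : 1 ≤ k)
    (hZLaw : P.map Z = gammaMeasure k 1)
    (η ξ τ Pt Eth β α d₁ dK : ℝ)
    (hη : 0 < η) (hξ : 0 < ξ) (hτ : 0 < τ) (hPt : 0 < Pt) (hEth : 0 < Eth)
    (hβ : 0 < β) (hα : 0 < α) (hd₁ : 0 < d₁) (hd : d₁ ≤ dK)
    (T c : ℝ) (hT : T = Eth / (η * ξ * τ * Pt))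
    (hc : c = T / (β * dK ^ (-α) + d₁ ^ (-α))) :
    (P {ω | g ω > d₁ ^ α * (T - d₁ ^ (-α) * Z ω) ∧
        g ω > β * d₁ ^ α * dK ^ (-α) * Z ω}).toReal =
      (∫ z in (0:ℝ)..c, (z ^ (k - 1) / (Nat.factorial (k - 1))) *
          Real.exp (-(T * d₁ ^ α))) +
      ∫ z in Set.Ioi c, (z ^ (k - 1) / (Nat.factorial (k - 1))) *
          Real.exp (-(β * d₁ ^ α * dK ^ (-α) + 1) * z) := by
  have hk0 : (0:ℝ) < (k:ℝ) := by exact_mod_cast Nat.lt_of_lt_of_le Nat.zero_lt_one hk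
  haveI : IsProbabilityMeasure (gammaMeasure (k:ℝ) 1) := isProbabilityMeasure_gammaMeasure hk0 one_pos
  haveI : IsProbabilityMeasure (expMeasure 1) := isProbabilityMeasure_gammaMeasure one_pos one_pos
  set a := d₁ ^ α with ha_def
  set u := d₁ ^ (-α) with hu_def
  set b := β * a * dK ^ (-α) with hb_def
  have hdK : 0 < dK := lt_of_lt_of_le hd₁ hd
  have ha : 0 < a := Real.rpow_pos_of_pos hd₁ _
  have hu : 0 < u := Real.rpow_pos_of_pos hd₁ _
  have hb : 0 < b := mul_pos (mul_pos hβ ha) (Real.rpow_pos_of_pos hdK _)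
  have hau : a * u = 1 := by
    rw [ha_def, hu_def, ← Real.rpow_add hd₁]; simp
  have hT0 : 0 < T := by rw [hT]; positivity
  have hD : 0 < β * dK ^ (-α) + u := by positivity
  have hb1 : b + 1 = a * (β * dK ^ (-α) + u) := by
    rw [mul_add, hau, hb_def]; ring
  have hc' : c * (b + 1) = a * T := by
    rw [hc, hb1]; field_simp
  have hc0 : 0 < c := by rw [hc]; positivity
  have hcle : c ≤ a * T := by nlinarith
  -- sets
  set S : Set (ℝ × ℝ) := {p | p.1 > a * (T - u * p.2) ∧ p.1 > b * p.2} with hS_def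
  have hSm : MeasurableSet S := by
    rw [hS_def, Set.setOf_and]
    exact (measurableSet_lt (by fun_prop) measurable_fst).inter
      (measurableSet_lt (by fun_prop) measurable_fst)
  have hmap : P.map (fun ω => (g ω, Z ω)) = (expMeasure 1).prod (gammaMeasure (k:ℝ) 1) := by
    rw [← hgLaw, ← hZLaw]
    exact (indepFun_iff_map_prod_eq_prod_map_map hg.aemeasurable hZ.aemeasurable).mp hInd
  have hPS : P {ω | g ω > a * (T - u * Z ω) ∧ g ω > b * Z ω}
      = ((expMeasure 1).prod (gammaMeasure (k:ℝ) 1)) S := by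
    rw [← hmap, Measure.map_apply (hg.prodMk hZ) hSm]
    rfl
  have hslice : ∀ z : ℝ, (fun x => (x, z)) ⁻¹' S = Set.Ioi (max (a * (T - u * z)) (b * z)) := by
    intro z; ext x
    simp [hS_def, max_lt_iff]
  have hprod : ((expMeasure 1).prod (gammaMeasure (k:ℝ) 1)) S
      = ∫⁻ z, gammaPDF (k:ℝ) 1 z *
          expMeasure 1 (Set.Ioi (max (a * (T - u * z)) (b * z))) ∂volume := by
    rw [Measure.prod_apply_symm hSm]
    have hmeas : Measurable (gammaPDF (k:ℝ) 1) := (measurable_gammaPDFReal _ _).ennreal_ofReal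
    rw [show (gammaMeasure (k:ℝ) 1) = volume.withDensity (gammaPDF (k:ℝ) 1) from rfl,
      lintegral_withDensity_eq_lintegral_mul_non_measurable _ hmeas
        (MeasureTheory.ae_of_all _ fun x => ENNReal.ofReal_lt_top)]
    exact lintegral_congr fun z => by rw [Pi.mul_apply, hslice z]
  -- pdf facts
  have hgamma_fact : Real.Gamma (k:ℝ) = (Nat.factorial (k-1) : ℝ) := by
    obtain ⟨m, rfl⟩ : ∃ m, k = m + 1 := ⟨k - 1, (Nat.succ_pred_eq_of_pos hk).symm⟩
    push_cast
    exact_mod_cast Real.Gamma_nat_eq_factorial m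
  have hcast : ((k:ℝ) - 1) = ((k - 1 : ℕ) : ℝ) := by
    rw [Nat.cast_sub hk]; norm_num
  have hpdf : ∀ z : ℝ, 0 < z → gammaPDF (k:ℝ) 1 z
      = ENNReal.ofReal (z ^ (k - 1) / (Nat.factorial (k - 1)) * Real.exp (-z)) := by
    intro z hz
    rw [gammaPDF_of_nonneg hz.le]
    congr 1
    rw [hcast, Real.rpow_natCast, Real.rpow_natCast, one_pow, hgamma_fact]
    ring
  -- the target functions
  set f1 : ℝ → ℝ := fun z => z ^ (k - 1) / (Nat.factorial (k - 1)) * Real.exp (-(T * a))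
    with hf1_def
  set f2 : ℝ → ℝ := fun z => z ^ (k - 1) / (Nat.factorial (k - 1)) * Real.exp (-(b + 1) * z)
    with hf2_def
  have hpt : ∀ z : ℝ, z ≠ 0 →
      gammaPDF (k:ℝ) 1 z * expMeasure 1 (Set.Ioi (max (a * (T - u * z)) (b * z)))
      = Set.indicator (Set.Ioc 0 c) (fun z => ENNReal.ofReal (f1 z)) z
        + Set.indicator (Set.Ioi c) (fun z => ENNReal.ofReal (f2 z)) z := by
    intro z hz
    rcases lt_trichotomy z 0 with hneg | h0 | hpos
    · have hn1 : z ∉ Set.Ioc 0 c := fun h => absurd h.1 (not_lt.mpr hneg.le)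
      have hn2 : z ∉ Set.Ioi c := fun h => absurd (hc0.trans h) (not_lt.mpr hneg.le)
      rw [gammaPDF_of_neg hneg, zero_mul,
        Set.indicator_of_notMem hn1, Set.indicator_of_notMem hn2, add_zero]
    · exact absurd h0 hz
    · have hATz : a * (T - u * z) = a * T - z := by
        rw [mul_sub, ← mul_assoc, hau, one_mul]
      by_cases hzc : z ≤ c
      · have hmax : max (a * (T - u * z)) (b * z) = a * T - z := by
          rw [hATz]
          apply max_eq_left
          nlinarith [mul_le_mul_of_nonneg_right hzc (by positivity : (0:ℝ) ≤ b + 1)]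
        have h0' : 0 ≤ a * T - z := by linarith
        have hm1 : z ∈ Set.Ioc 0 c := ⟨hpos, hzc⟩
        have hn2 : z ∉ Set.Ioi c := fun h => absurd hzc (not_le.mpr h)
        rw [hmax, expMeasure_one_Ioi h0', hpdf z hpos,
          Set.indicator_of_mem hm1,
          Set.indicator_of_notMem hn2, add_zero,
          ← ENNReal.ofReal_mul (by positivity)]
        congr 1
        rw [hf1_def, mul_assoc, ← Real.exp_add]
        ring_nf
      · push_neg at hzc
        have hmax : max (a * (T - u * z)) (b * z) = b * z := by
          rw [hATz]
          apply max_eq_right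
          nlinarith [mul_le_mul_of_nonneg_right hzc.le (by positivity : (0:ℝ) ≤ b + 1)]
        have h0' : 0 ≤ b * z := by positivity
        have hn1 : z ∉ Set.Ioc 0 c := fun h => absurd h.2 (not_le.mpr hzc)
        have hm2 : z ∈ Set.Ioi c := Set.mem_Ioi.mpr hzc
        rw [hmax, expMeasure_one_Ioi h0', hpdf z hpos,
          Set.indicator_of_notMem hn1,
          Set.indicator_of_mem hm2, zero_add,
          ← ENNReal.ofReal_mul (by positivity)]
        congr 1
        rw [hf2_def, mul_assoc, ← Real.exp_add]
        ring_nf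
  have h0ae : ∀ᵐ z : ℝ, z ≠ 0 := by
    simpa [ae_iff] using measure_singleton (0:ℝ)
  have hsplit : (∫⁻ z, gammaPDF (k:ℝ) 1 z *
          expMeasure 1 (Set.Ioi (max (a * (T - u * z)) (b * z))) ∂volume)
      = (∫⁻ z in Set.Ioc 0 c, ENNReal.ofReal (f1 z) ∂volume)
        + ∫⁻ z in Set.Ioi c, ENNReal.ofReal (f2 z) ∂volume := by
    rw [lintegral_congr_ae (h0ae.mono fun z hz => hpt z hz),
      lintegral_add_left (((by fun_prop : Measurable f1).ennreal_ofReal).indicator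
        measurableSet_Ioc),
      lintegral_indicator measurableSet_Ioc _, lintegral_indicator measurableSet_Ioi _]
  -- assemble
  have hchain : P {ω | g ω > a * (T - u * Z ω) ∧ g ω > b * Z ω}
      = (∫⁻ z in Set.Ioc 0 c, ENNReal.ofReal (f1 z) ∂volume)
        + ∫⁻ z in Set.Ioi c, ENNReal.ofReal (f2 z) ∂volume := by
    rw [hPS, hprod, hsplit]
  have hfin : (∫⁻ z in Set.Ioc 0 c, ENNReal.ofReal (f1 z) ∂volume)
      + (∫⁻ z in Set.Ioi c, ENNReal.ofReal (f2 z) ∂volume) ≠ ⊤ := by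
    rw [← hchain]; exact measure_ne_top P _
  have hfin1 : (∫⁻ z in Set.Ioc 0 c, ENNReal.ofReal (f1 z) ∂volume) ≠ ⊤ :=
    ne_top_of_le_ne_top hfin le_self_add
  have hfin2 : (∫⁻ z in Set.Ioi c, ENNReal.ofReal (f2 z) ∂volume) ≠ ⊤ :=
    ne_top_of_le_ne_top hfin le_add_self
  rw [hchain, ENNReal.toReal_add hfin1 hfin2]
  have e1 : ∫ z in Set.Ioc 0 c, f1 z ∂volume
      = (∫⁻ z in Set.Ioc 0 c, ENNReal.ofReal (f1 z) ∂volume).toReal := by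
    rw [integral_eq_lintegral_of_nonneg_ae]
    · filter_upwards [ae_restrict_mem measurableSet_Ioc] with z hz
      have hz0 : 0 < z := hz.1
      simp only [hf1_def, Pi.zero_apply]
      positivity
    · have : Measurable f1 := by rw [hf1_def]; fun_prop
      exact this.aestronglyMeasurable
  have e2 : ∫ z in Set.Ioi c, f2 z ∂volume
      = (∫⁻ z in Set.Ioi c, ENNReal.ofReal (f2 z) ∂volume).toReal := by
    rw [integral_eq_lintegral_of_nonneg_ae]
    · filter_upwards [ae_restrict_mem measurableSet_Ioi] with z hz
      have hz0 : 0 < z := hc0.trans hz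
      simp only [hf2_def, Pi.zero_apply]
      positivity
    · have : Measurable f2 := by
        rw [hf2_def]
        exact ((measurable_id.pow_const _).div_const _).mul
          (Real.measurable_exp.comp (measurable_id.const_mul _))
      exact this.aestronglyMeasurable
  rw [intervalIntegral.integral_of_le hc0.le]
  rw [e1]
  rw [e2]
end
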